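/- arXiv:1805.11888 — 4 statements merged into one kernel-verified Lean document; each statement's English description precedes it below -/
import Mathlib

section
/- Let f : E^r → ℚ be an alternating function satisfying the Grassmann–Plücker relations: for all x₂,…,x_r ∈ E and y₀,…,y_r ∈ E, ∑_{i=0}^r (−1)^i f(y_i, x₂,…,x_r) · f(y₀,…,ŷ_i,…,y_r) = 0. Then for all tuples (a₁,…,a_r) and (b₁,…,b_r) in E^r, ∑_{σ ∈ S_r} sgn(σ) ∏_{i=1}^r f(a₁,…,a_{i−1}, b_{σ(i)}, a_{i+1},…,a_r) = f(a₁,…,a_r)^{r−1} · f(b₁,…,b_r). -/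
open Finset

/-- An alternating function: applying a permutation multiplies the value by its sign. -/
def IsAlt {E : Type*} {r : ℕ} (f : (Fin r → E) → ℚ) : Prop :=
  ∀ (σ : Equiv.Perm (Fin r)) (x : Fin r → E),
    f (x ∘ σ) = ((Equiv.Perm.sign σ : ℤ) : ℚ) * f x

/-- The Grassmann–Plücker relation for a function of rank `r + 1`. -/
def IsGP {E : Type*} {r : ℕ} (f : (Fin (r + 1) → E) → ℚ) : Prop :=
  ∀ (x : Fin r → E) (y : Fin (r + 2) → E),
    ∑ i : Fin (r + 2), (-1 : ℚ) ^ (i : ℕ) * f (Fin.cons (y i) x) * f (y ∘ i.succAbove) = 0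

lemma swap01 {E : Type*} {r : ℕ} {f : (Fin (r + 2) → E) → ℚ} (halt : IsAlt f)
    (u v : E) (w : Fin r → E) :
    f (Fin.cons u (Fin.cons v w)) = - f (Fin.cons v (Fin.cons u w)) := by
  have h := halt (Equiv.swap 0 1) (Fin.cons v (Fin.cons u w))
  have hc : (Fin.cons v (Fin.cons u w) : Fin (r+2) → E) ∘ (Equiv.swap 0 1)
      = Fin.cons u (Fin.cons v w) := by
    funext i
    refine Fin.cases ?_ (fun j => Fin.cases ?_ (fun k => ?_) j) i
    · simp [Equiv.swap_apply_left]
    · have hs : Equiv.swap (0 : Fin (r+2)) 1 ((0 : Fin (r+1)).succ) = 0 := by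
        rw [Fin.succ_zero_eq_one]; exact Equiv.swap_apply_right 0 1
      simp only [Function.comp_apply, hs, Fin.cons_zero, Fin.cons_succ]
    · have h1 : (k.succ.succ : Fin (r+2)) ≠ 0 := Fin.succ_ne_zero _
      have h2 : (k.succ.succ : Fin (r+2)) ≠ 1 := by
        rw [← Fin.succ_zero_eq_one]
        exact fun h => Fin.succ_ne_zero _ (Fin.succ_injective _ h)
      simp [Equiv.swap_apply_of_ne_of_ne h1 h2]
  rw [hc] at h
  rw [h, Equiv.Perm.sign_swap (by simp [Fin.ext_iff])]
  push_cast
  ring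

lemma contract_alt {E : Type*} {r : ℕ} {f : (Fin (r + 2) → E) → ℚ} (halt : IsAlt f)
    (c : E) : IsAlt (fun z : Fin (r+1) → E => f (Fin.cons c z)) := by
  intro σ z
  have h := halt (Equiv.Perm.decomposeFin.symm (0, σ)) (Fin.cons c z)
  have hc : (Fin.cons c z : Fin (r+2) → E) ∘ (Equiv.Perm.decomposeFin.symm (0, σ))
      = Fin.cons c (z ∘ σ) := by
    funext i
    refine Fin.cases ?_ (fun j => ?_) i
    · simp [Equiv.Perm.decomposeFin_symm_apply_zero]
    · simp [Equiv.Perm.decomposeFin_symm_apply_succ]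
  rw [hc] at h
  simpa [Equiv.Perm.decomposeFin.symm_sign] using h

lemma update_zero {E : Type*} {r : ℕ} (a : Fin (r+1) → E) (c : E) :
    Function.update a 0 c = Fin.cons c (a ∘ Fin.succ) := by
  funext i
  refine Fin.cases ?_ (fun j => ?_) i
  · simp
  · simp [Function.update_apply, Fin.succ_ne_zero]

lemma update_succ {E : Type*} {r : ℕ} (a : Fin (r+2) → E) (i : Fin (r+1)) (c : E) :
    Function.update a i.succ c = Fin.cons (a 0) (Function.update (a ∘ Fin.succ) i c) := by
  funext j
  refine Fin.cases ?_ (fun k => ?_) j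
  · simp [Function.update_apply, (Fin.succ_ne_zero i).symm]
  · simp [Function.update_apply, Fin.succ_inj, Function.comp]

lemma contract_gp {E : Type*} {r : ℕ} {f : (Fin (r + 2) → E) → ℚ} (halt : IsAlt f)
    (hGP : IsGP f) (c : E) : IsGP (fun z : Fin (r+1) → E => f (Fin.cons c z)) := by
  intro x y
  have h := hGP (Fin.cons c x) (Fin.cons c y)
  rw [Fin.sum_univ_succ] at h
  simp only [Fin.cons_zero, Fin.cons_succ] at h
  have h0 : f (Fin.cons c (Fin.cons c x)) = 0 := by
    have hs := swap01 halt c c x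
    linarith
  rw [h0] at h
  simp only [mul_zero, zero_mul, zero_add] at h
  rw [← h]
  refine Finset.sum_congr rfl fun j _ => ?_
  have e1 : f (Fin.cons (y j) (Fin.cons c x))
      = - f (Fin.cons c (Fin.cons (y j) x)) := swap01 halt (y j) c x
  have e2 : (Fin.cons c y : Fin (r+3) → E) ∘ j.succ.succAbove
      = Fin.cons c (y ∘ j.succAbove) := by
    funext i
    refine Fin.cases ?_ (fun k => ?_) i
    · simp
    · simp [Fin.succ_succAbove_succ]
  rw [e1, e2, Fin.val_succ, pow_succ]
  ring

lemma det_aux {E : Type*} : ∀ (r : ℕ) (f : (Fin (r + 1) → E) → ℚ),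
    IsAlt f → IsGP f → ∀ a b : Fin (r+1) → E,
    Matrix.det (Matrix.of fun i j => f (Function.update a i (b j))) = f a ^ r * f b := by
  intro r
  induction r with
  | zero =>
    intro f _ _ a b
    rw [Matrix.det_fin_one]
    have hb : Function.update a 0 (b 0) = b := by
      funext i
      have hi : i = 0 := Fin.ext (by omega)
      subst hi
      simp
    simp [hb]
  | succ r ih =>
    intro f halt hGP a b
    set g : (Fin (r+1) → E) → ℚ := fun z => f (Fin.cons (a 0) z) with hg
    have hga : IsAlt g := contract_alt halt (a 0)
    have hggp : IsGP g := contract_gp halt hGP (a 0)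
    rw [Matrix.det_succ_row_zero]
    have hsub : ∀ j : Fin (r+2),
        Matrix.det ((Matrix.of fun i j => f (Function.update a i (b j))).submatrix
          Fin.succ j.succAbove) = f a ^ r * f (Fin.cons (a 0) (b ∘ j.succAbove)) := by
      intro j
      have : ((Matrix.of fun i j => f (Function.update a i (b j))).submatrix
          Fin.succ j.succAbove)
          = Matrix.of fun i k => g (Function.update (a ∘ Fin.succ) i ((b ∘ j.succAbove) k)) := by
        ext i k
        simp only [Matrix.submatrix_apply, Matrix.of_apply, hg]
        rw [update_succ]
        rfl
      rw [this, ih g hga hggp (a ∘ Fin.succ) (b ∘ j.succAbove)]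
      have hga' : g (a ∘ Fin.succ) = f a := by
        simp only [hg]
        exact congrArg f (funext fun i => Fin.cases rfl (fun k => rfl) i)
      rw [hga']
    have key : ∑ j : Fin (r+2), (-1:ℚ)^(j:ℕ) * f (Function.update a 0 (b j)) *
        f (Fin.cons (a 0) (b ∘ j.succAbove)) = f a * f b := by
      have h := hGP (a ∘ Fin.succ) (Fin.cons (a 0) b)
      rw [Fin.sum_univ_succ] at h
      simp only [Fin.cons_zero, Fin.cons_succ] at h
      have h0 : f (Fin.cons (a 0) (a ∘ Fin.succ)) = f a :=
        congrArg f (funext fun i => Fin.cases rfl (fun k => rfl) i)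
      have h1 : (Fin.cons (a 0) b : Fin (r+3) → E) ∘ (0 : Fin (r+3)).succAbove = b := by
        funext i; simp
      rw [h0, h1] at h
      have h2 : ∀ j : Fin (r+2),
          (-1:ℚ)^((j.succ : Fin (r+3)) : ℕ) * f (Fin.cons (b j) (a ∘ Fin.succ)) *
          f ((Fin.cons (a 0) b : Fin (r+3) → E) ∘ j.succ.succAbove)
          = -((-1:ℚ)^(j:ℕ) * f (Function.update a 0 (b j)) * f (Fin.cons (a 0) (b ∘ j.succAbove))) := by
        intro j
        have e1 : f (Fin.cons (b j) (a ∘ Fin.succ))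
            = f (Function.update a 0 (b j)) := by
          rw [update_zero]
        have e2 : (Fin.cons (a 0) b : Fin (r+3) → E) ∘ j.succ.succAbove
            = Fin.cons (a 0) (b ∘ j.succAbove) := by
          funext i
          refine Fin.cases ?_ (fun k => ?_) i
          · simp
          · simp [Fin.succ_succAbove_succ]
        rw [e1, e2, Fin.val_succ]
        ring
      rw [Finset.sum_congr rfl (fun j _ => h2 j)] at h
      rw [Finset.sum_neg_distrib] at h
      simp only [Fin.val_zero, pow_zero, one_mul] at h
      linarith
    calc ∑ j : Fin (r+2), (-1:ℚ)^(j:ℕ) *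
          (Matrix.of fun i j => f (Function.update a i (b j))) 0 j *
          Matrix.det ((Matrix.of fun i j => f (Function.update a i (b j))).submatrix
            Fin.succ j.succAbove)
        = ∑ j : Fin (r+2), f a ^ r * ((-1:ℚ)^(j:ℕ) * f (Function.update a 0 (b j)) *
            f (Fin.cons (a 0) (b ∘ j.succAbove))) := by
          refine Finset.sum_congr rfl fun j _ => ?_
          rw [hsub j]
          simp only [Matrix.of_apply]
          ring
      _ = f a ^ r * (f a * f b) := by rw [← Finset.mul_sum, key]
      _ = f a ^ (r+1) * f b := by ring

/-- Generalized Leibniz formula for GP-functions. -/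
theorem leibniz_formula_GP {E : Type*} {r : ℕ} (f : (Fin (r + 1) → E) → ℚ)
    (halt : IsAlt f) (hGP : IsGP f) (a b : Fin (r + 1) → E) :
    ∑ σ : Equiv.Perm (Fin (r + 1)), ((Equiv.Perm.sign σ : ℤ) : ℚ) *
      ∏ i : Fin (r + 1), f (Function.update a i (b (σ i))) = f a ^ r * f b := by
  rw [← det_aux r f halt hGP a b, ← Matrix.det_transpose, Matrix.det_apply']
  rfl
end

section
/- Let f : E^r → ℚ be a GP-function, not identically zero, and fix a tuple B₀ = (b₁,…,b_r) with f(B₀) ≠ 0. For each e ∈ E define v_e ∈ ℚ^r by (v_e)_i = f(b₁,…,b_{i−1}, e, b_{i+1},…,b_r). Then for every tuple A = (a₁,…,a_r) ∈ E^r, det(v_{a₁},…,v_{a_r}) = f(B₀)^{r−1} · f(A). -/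
open Finset

section aux
variable {E : Type*} {r : ℕ} {f : (Fin (r + 1) → E) → ℚ}

lemma alt_eq_zero (halt : IsAlt f) (x : Fin (r+1) → E) {i j : Fin (r+1)}
    (hij : i ≠ j) (hx : x i = x j) : f x = 0 := by
  have h := halt (Equiv.swap i j) x
  have hc : x ∘ (Equiv.swap i j) = x := by
    funext k
    simp only [Function.comp_apply]
    rcases eq_or_ne k i with rfl | hki
    · rw [Equiv.swap_apply_left, hx]
    rcases eq_or_ne k j with rfl | hkj
    · rw [Equiv.swap_apply_right, hx]
    · rw [Equiv.swap_apply_of_ne_of_ne hki hkj]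
  rw [hc, Equiv.Perm.sign_swap hij] at h
  push_cast at h; linarith

lemma alt_cons (halt : IsAlt f) (x : Fin (r+1) → E) (i : Fin (r+1)) (c : E) :
    f (Fin.cons c (x ∘ i.succAbove)) = (-1 : ℚ)^(i:ℕ) * f (Function.update x i c) := by
  have hc : Fin.cons c (x ∘ i.succAbove) = (Function.update x i c) ∘ ⇑(i.cycleRange.symm) := by
    funext j
    refine Fin.cases ?_ (fun l => ?_) j
    · rw [Function.comp_apply, Fin.cycleRange_symm_zero, Function.update_self, Fin.cons_zero]
    · rw [Function.comp_apply, Fin.cycleRange_symm_succ,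
        Function.update_of_ne (Fin.succAbove_ne i l), Fin.cons_succ, Function.comp_apply]
  rw [hc]
  have h := halt i.cycleRange.symm (Function.update x i c)
  rw [h]
  congr 1
  rw [Equiv.Perm.sign_symm, Fin.sign_cycleRange]
  push_cast
  ring

lemma gp_key (halt : IsAlt f) (hGP : IsGP f) (B₀ a : Fin (r+1) → E) (m : Fin (r+1)) :
    f B₀ * f a
      = ∑ k : Fin (r+1), f (Function.update B₀ k (a m)) * f (Function.update a m (B₀ k)) := by
  have h := hGP (a ∘ m.succAbove) (Fin.cons (a m) B₀)
  rw [Fin.sum_univ_succ] at h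
  have h0 : (Fin.cons (a m) B₀ : Fin (r+2) → E) ∘ (0 : Fin (r+2)).succAbove = B₀ := by
    funext j; simp [Fin.succAbove_zero]
  have hterm : ∀ k : Fin (r+1),
      (-1:ℚ) ^ ((Fin.succ k : Fin (r+2)) : ℕ)
        * f (Fin.cons ((Fin.cons (a m) B₀ : Fin (r+2) → E) (Fin.succ k)) (a ∘ m.succAbove))
        * f ((Fin.cons (a m) B₀ : Fin (r+2) → E) ∘ (Fin.succ k).succAbove)
      = -((-1:ℚ)^(m:ℕ) * (f (Function.update B₀ k (a m)) * f (Function.update a m (B₀ k)))) := by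
    intro k
    have h1 : (Fin.cons (a m) B₀ : Fin (r+2) → E) (Fin.succ k) = B₀ k := Fin.cons_succ _ _ _
    have h2 : (Fin.cons (a m) B₀ : Fin (r+2) → E) ∘ (Fin.succ k).succAbove
        = Fin.cons (a m) (B₀ ∘ k.succAbove) := by
      funext j
      refine Fin.cases ?_ (fun l => ?_) j
      · simp
      · simp [Fin.succ_succAbove_succ]
    rw [h1, h2, alt_cons halt a m (B₀ k), alt_cons halt B₀ k (a m)]
    have : ((Fin.succ k : Fin (r+2)) : ℕ) = (k : ℕ) + 1 := Fin.val_succ k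
    rw [this, pow_succ]
    ring_nf
    rw [show ((k:ℕ) * 2) = 2 * (k:ℕ) by ring, pow_mul]
    ring_nf
  rw [Finset.sum_congr rfl (fun k _ => hterm k), h0, Fin.cons_zero] at h
  have hfa : f (Fin.cons (a m) (a ∘ m.succAbove)) = (-1:ℚ)^(m:ℕ) * f a := by
    rw [alt_cons halt a m (a m), Function.update_eq_self]
  rw [hfa, Finset.sum_neg_distrib, ← Finset.mul_sum] at h
  simp only [Fin.val_zero, pow_zero, one_mul] at h
  have hpow : (-1:ℚ)^(m:ℕ) ≠ 0 := pow_ne_zero _ (by norm_num)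
  have h2 : (-1:ℚ)^(m:ℕ) * (f B₀ * f a)
      = (-1:ℚ)^(m:ℕ) * ∑ k : Fin (r+1),
          f (Function.update B₀ k (a m)) * f (Function.update a m (B₀ k)) := by
    linarith [h]
  exact mul_left_cancel₀ hpow h2
end aux

/-- Every GP-function is, up to the scalar `f B₀ ^ r`, a determinant function. -/
theorem GP_eq_det {E : Type*} {r : ℕ} (f : (Fin (r + 1) → E) → ℚ)
    (halt : IsAlt f) (hGP : IsGP f) (B₀ : Fin (r + 1) → E) (hB₀ : f B₀ ≠ 0)
    (a : Fin (r + 1) → E) :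
    (Matrix.of fun i j : Fin (r + 1) => f (Function.update B₀ i (a j))).det
      = f B₀ ^ r * f a := by
  classical
  set v : E → (Fin (r+1) → ℚ) := fun e i => f (Function.update B₀ i e) with hv
  set D := (Matrix.detRowAlternating : (Fin (r+1) → ℚ) [⋀^Fin (r+1)]→ₗ[ℚ] ℚ) with hD
  have hvb : ∀ k : Fin (r+1), v (B₀ k) = f B₀ • (Pi.single k 1 : Fin (r + 1) → ℚ) := by
    intro k
    funext i
    rcases eq_or_ne i k with rfl | hik
    · simp [hv, Function.update_eq_self]
    · have h0 : f (Function.update B₀ i (B₀ k)) = 0 := by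
        refine alt_eq_zero halt _ hik ?_
        rw [Function.update_self, Function.update_of_ne hik.symm]
      simp [hv, h0, Pi.single_apply, hik]
  have hvdec : ∀ e : E, ∑ k : Fin (r+1), v e k • v (B₀ k) = f B₀ • v e := by
    intro e
    funext i
    rw [Finset.sum_apply]
    rw [Finset.sum_eq_single i]
    · simp [hvb, Pi.single_apply]; ring
    · intro k _ hk
      simp [hvb, Pi.single_apply, Ne.symm hk]
    · simp
  have main : ∀ m : ℕ, ∀ a : Fin (r+1) → E,
      (∀ j : Fin (r+1), m ≤ (j:ℕ) → ∃ k, a j = B₀ k) →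
      D (fun j => v (a j)) = f B₀ ^ r * f a := by
    intro m
    induction m with
    | zero =>
      intro a ha
      by_cases hinj : Function.Injective a
      · choose c hc using fun j => ha j (Nat.zero_le _)
        have hcinj : Function.Injective c := fun i j hij => hinj (by rw [hc, hc, hij])
        let σ : Equiv.Perm (Fin (r+1)) :=
          Equiv.ofBijective c (Finite.injective_iff_bijective.mp hcinj)
        have haσ : a = B₀ ∘ σ := funext fun j => hc j
        have hDb : D (fun k => v (B₀ k)) = f B₀ ^ (r+1) := by
          have h1 : (fun k : Fin (r+1) => v (B₀ k))
              = fun k => f B₀ • (Pi.single k 1 : Fin (r + 1) → ℚ) := funext hvb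
          rw [h1]
          have h2 := D.toMultilinearMap.map_smul_univ (fun _ => f B₀)
            (fun k : Fin (r+1) => (Pi.single k 1 : Fin (r + 1) → ℚ))
          rw [show (D fun k : Fin (r+1) => f B₀ • (Pi.single k 1 : Fin (r + 1) → ℚ))
              = D.toMultilinearMap (fun k : Fin (r+1) =>
                  (fun _ : Fin (r+1) => f B₀) k • (Pi.single k 1 : Fin (r + 1) → ℚ)) from rfl, h2]
          have h3 : D.toMultilinearMap (fun k : Fin (r+1) => (Pi.single k 1 : Fin (r + 1) → ℚ)) = 1 := by
            have h4 : (Matrix.of fun k : Fin (r+1) => (Pi.single k 1 : Fin (r + 1) → ℚ))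
                = (1 : Matrix (Fin (r+1)) (Fin (r+1)) ℚ) := by
              ext i j
              simp [Matrix.one_apply, Pi.single_apply, eq_comm]
            show Matrix.detRowAlternating (Matrix.of fun k : Fin (r+1) => (Pi.single k 1 : Fin (r + 1) → ℚ)) = 1
            rw [show Matrix.detRowAlternating (Matrix.of fun k : Fin (r+1) => (Pi.single k 1 : Fin (r + 1) → ℚ))
                = (Matrix.of fun k : Fin (r+1) => (Pi.single k 1 : Fin (r + 1) → ℚ)).det from rfl, h4,
              Matrix.det_one]
          rw [h3, smul_eq_mul, mul_one, Finset.prod_const]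
          simp
        have hperm : D (fun j => v ((B₀ ∘ σ) j)) = ((Equiv.Perm.sign σ : ℤ) : ℚ) * D (fun k => v (B₀ k)) := by
          have := D.map_perm (fun k => v (B₀ k)) σ
          rw [show (fun j => v ((B₀ ∘ σ) j)) = (fun k => v (B₀ k)) ∘ σ from rfl, this]
          simp [Units.smul_def, zsmul_eq_mul]
        rw [haσ, hperm, hDb, halt σ B₀]
        ring
      · obtain ⟨i, j, hij, hne⟩ : ∃ i j, a i = a j ∧ i ≠ j := by
          simp only [Function.Injective, not_forall] at hinj
          obtain ⟨i, j, h1, h2⟩ := hinj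
          exact ⟨i, j, h1, h2⟩
        rw [alt_eq_zero halt a hne hij, mul_zero]
        exact D.map_eq_zero_of_eq _ (by simp [hij]) hne
    | succ m ih =>
      intro a ha
      by_cases hm : m < r + 1
      · set m' : Fin (r+1) := ⟨m, hm⟩ with hm'
        set w : Fin (r+1) → (Fin (r+1) → ℚ) := fun j => v (a j) with hw
        have hupd : ∀ x : E, (fun j => v (Function.update a m' x j))
            = Function.update w m' (v x) := by
          intro x
          funext j
          rcases eq_or_ne j m' with rfl | hj
          · simp
          · simp [Function.update_of_ne hj, hw]
        have expand : f B₀ * D w = ∑ k : Fin (r+1), v (a m') k * D (Function.update w m' (v (B₀ k))) := by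
          have e1 : ∀ k : Fin (r+1), v (a m') k * D (Function.update w m' (v (B₀ k)))
              = D (Function.update w m' (v (a m') k • v (B₀ k))) := by
            intro k
            rw [D.map_update_smul, smul_eq_mul]
          rw [Finset.sum_congr rfl (fun k _ => e1 k), ← D.map_update_sum, hvdec,
            D.map_update_smul, smul_eq_mul]
          congr 2
          exact (Function.update_eq_self m' w).symm
        have hIH : ∀ k : Fin (r+1), D (Function.update w m' (v (B₀ k)))
            = f B₀ ^ r * f (Function.update a m' (B₀ k)) := by
          intro k
          rw [← hupd (B₀ k)]
          apply ih
          intro j hj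
          rcases eq_or_ne j m' with rfl | hne
          · exact ⟨k, Function.update_self ..⟩
          · rw [Function.update_of_ne hne]
            refine ha j ?_
            have : (j:ℕ) ≠ m := fun h' => hne (Fin.ext h')
            omega
        apply mul_left_cancel₀ hB₀
        rw [expand, Finset.sum_congr rfl (fun k _ => by rw [hIH k])]
        have hkey := gp_key halt hGP B₀ a m'
        calc ∑ k : Fin (r+1), v (a m') k * (f B₀ ^ r * f (Function.update a m' (B₀ k)))
            = f B₀ ^ r * ∑ k : Fin (r+1),
                f (Function.update B₀ k (a m')) * f (Function.update a m' (B₀ k)) := by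
              rw [Finset.mul_sum]
              refine Finset.sum_congr rfl fun k _ => ?_
              show f (Function.update B₀ k (a m')) * _ = _
              ring
          _ = f B₀ ^ r * (f B₀ * f a) := by rw [← hkey]
          _ = f B₀ * (f B₀ ^ r * f a) := by ring
      · exact ih a fun j hj => absurd j.isLt (by omega)
  have hconn : (Matrix.of fun i j : Fin (r + 1) => f (Function.update B₀ i (a j))).det
      = D (fun j => v (a j)) := by
    rw [← Matrix.det_transpose]
    rfl
  rw [hconn]
  exact main (r+1) a (fun j hj => absurd j.isLt (by omega))
end

section
/- Let χ : E^r → {−1,0,1} and m : E^r → ℚ_{>0} be functions with χ alternating, m symmetric (invariant under permutations of arguments), and suppose the pointwise product f = χ·m satisfies the Grassmann–Plücker relations. If χ' : E^r → {−1,0,1} is another alternating function such that χ'·m also satisfies the Grassmann–Plücker relations, χ and χ' have the same support, and χ' agrees with χ on some tuple B₀ with χ(B₀) ≠ 0 and on all tuples differing from B₀ in one coordinate, then χ = χ'. -/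
/-!
Multiplying by the positive symmetric `m` turns `χ` and `χ'` into alternating
Grassmann–Plücker functions `f`, `g` with `f B₀ = g B₀ ≠ 0` that agree at every neighbour of
`B₀`; it suffices to show that these values determine such a function. Induct on the number
of entries of a tuple `X` outside the range of `B₀`. If there are none, `X` repeats an entry or
is a rearrangement of `B₀`. Otherwise move such an entry to the front and apply (GP) with
`x = tail X` and `y = (B₀, X 0)`: its last term is `± f X · f B₀`, and the others involve the
tuples `(B₀ j, tail X)`, which have fewer entries outside the range, and the neighbours
`B₀[j ↦ X 0]`, up to reordering.
-/

open Finset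

namespace IsAlt

variable {E : Type*} {n : ℕ} {f g : (Fin n → E) → ℚ}

theorem apply_eq_zero_of_apply_eq (hf : IsAlt f) {x : Fin n → E} {i j : Fin n} (hij : i ≠ j)
    (hx : x i = x j) : f x = 0 := by
  have hswap : x ∘ Equiv.swap i j = x := by
    rw [Equiv.comp_swap_eq_update, hx, Function.update_eq_self, ← hx, Function.update_eq_self]
  have h := hf (Equiv.swap i j) x
  rw [hswap, Equiv.Perm.sign_swap hij] at h
  push_cast at h
  linarith

theorem mul_of_comp_perm_eq (hf : IsAlt f) {m : (Fin n → E) → ℚ}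
    (hm : ∀ (σ : Equiv.Perm (Fin n)) x, m (x ∘ σ) = m x) : IsAlt fun x => f x * m x := by
  intro σ x
  simp only [hf σ x, hm σ x, mul_assoc]

theorem apply_comp_perm_eq_iff (hf : IsAlt f) (hg : IsAlt g) (σ : Equiv.Perm (Fin n))
    (x : Fin n → E) : f (x ∘ σ) = g (x ∘ σ) ↔ f x = g x := by
  have hsign : ((Equiv.Perm.sign σ : ℤ) : ℚ) ≠ 0 := by
    exact_mod_cast (Equiv.Perm.sign σ).ne_zero
  rw [hf σ x, hg σ x, mul_right_inj' hsign]

theorem apply_eq_of_forall_mem_range (hf : IsAlt f) (hg : IsAlt g) {B : Fin n → E}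
    (hB : f B = g B) {X : Fin n → E} (hX : ∀ l, X l ∈ Set.range B) : f X = g X := by
  by_cases hinj : X.Injective
  · choose ι hι using hX
    have hιinj : ι.Injective := fun a b hab => hinj (by rw [← hι a, ← hι b, hab])
    let σ : Equiv.Perm (Fin n) := Equiv.ofBijective ι (Finite.injective_iff_bijective.mp hιinj)
    have hXB : X = B ∘ σ := funext fun l => (hι l).symm
    rw [hXB, apply_comp_perm_eq_iff hf hg]
    exact hB
  · obtain ⟨a, b, hab, hne⟩ : ∃ a b, X a = X b ∧ a ≠ b := by
      simpa [Function.Injective] using hinj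
    rw [hf.apply_eq_zero_of_apply_eq hne hab, hg.apply_eq_zero_of_apply_eq hne hab]

end IsAlt

theorem Fin.exists_snoc_comp_castSucc_succAbove_eq {E : Type*} {r : ℕ} (B : Fin (r + 1) → E)
    (e : E) (j : Fin (r + 1)) :
    ∃ τ : Equiv.Perm (Fin (r + 1)),
      Fin.snoc B e ∘ j.castSucc.succAbove = Function.update B j e ∘ τ := by
  refine ⟨(finSuccEquiv' (Fin.last r)).trans (finSuccEquiv' j).symm, funext fun k => ?_⟩
  induction k using Fin.lastCases with
  | last =>
    have hlast : j.castSucc.succAbove (Fin.last r) = Fin.last (r + 1) :=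
      (Fin.succAbove_castSucc_of_le _ _ (Fin.le_last j)).trans (Fin.succ_last r)
    rw [Function.comp_apply, Function.comp_apply, hlast, Fin.snoc_last, Equiv.trans_apply,
      finSuccEquiv'_at, finSuccEquiv'_symm_none, Function.update_self]
  | cast k =>
    rw [Function.comp_apply, Function.comp_apply, Fin.castSucc_succAbove_castSucc,
      Fin.snoc_castSucc, Equiv.trans_apply, finSuccEquiv'_last_apply_castSucc,
      finSuccEquiv'_symm_some, Function.update_of_ne (Fin.succAbove_ne j k)]

theorem IsGP.apply_eq_of_forall_apply_cons_eq {E : Type*} {r : ℕ}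
    {f g : (Fin (r + 1) → E) → ℚ} (hf : IsAlt f) (hg : IsAlt g) (hGPf : IsGP f)
    (hGPg : IsGP g) {B X : Fin (r + 1) → E} (hB : f B ≠ 0) (hB' : f B = g B)
    (hupd : ∀ j, f (Function.update B j (X 0)) = g (Function.update B j (X 0)))
    (hcons : ∀ j, f (Fin.cons (B j) (Fin.tail X)) = g (Fin.cons (B j) (Fin.tail X))) :
    f X = g X := by
  have hGf := hGPf (Fin.tail X) (Fin.snoc B (X 0))
  have hGg := hGPg (Fin.tail X) (Fin.snoc B (X 0))
  rw [Fin.sum_univ_castSucc] at hGf hGg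
  simp only [Fin.snoc_castSucc, Fin.snoc_last, Fin.cons_self_tail,
    Fin.succAbove_last, Fin.snoc_comp_castSucc, Fin.val_castSucc, Fin.val_last] at hGf hGg
  have hterms : ∀ j : Fin (r + 1),
      f (Fin.snoc B (X 0) ∘ j.castSucc.succAbove) =
        g (Fin.snoc B (X 0) ∘ j.castSucc.succAbove) := by
    intro j
    obtain ⟨τ, hτ⟩ := Fin.exists_snoc_comp_castSucc_succAbove_eq B (X 0) j
    rw [hτ, hf.apply_comp_perm_eq_iff hg]
    exact hupd j
  simp only [hcons, hterms] at hGf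
  have hlast : (-1 : ℚ) ^ (r + 1) * f X * f B = (-1) ^ (r + 1) * g X * g B := by linarith
  rw [← hB'] at hlast
  exact mul_left_cancel₀ (pow_ne_zero _ (neg_ne_zero.mpr one_ne_zero))
    (mul_right_cancel₀ hB hlast)

section numOutsideRange

open scoped Classical

variable {E : Type*} {m n : ℕ}

noncomputable def numOutsideRange (B : Fin m → E) (X : Fin n → E) : ℕ :=
  #{l | X l ∉ Set.range B}

theorem numOutsideRange_comp_perm (B : Fin m → E) (X : Fin n → E) (σ : Equiv.Perm (Fin n)) :
    numOutsideRange B (X ∘ σ) = numOutsideRange B X := by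
  simp only [numOutsideRange, Finset.card_filter, Function.comp_apply]
  exact Equiv.sum_comp σ fun l => if X l ∉ Set.range B then 1 else 0

theorem numOutsideRange_cons (B : Fin m → E) (a : E) (X : Fin n → E) :
    numOutsideRange B (Fin.cons a X : Fin (n + 1) → E) =
      (if a ∈ Set.range B then 0 else 1) + numOutsideRange B X := by
  simp only [numOutsideRange, Finset.card_filter, Fin.sum_univ_succ, Fin.cons_zero,
    Fin.cons_succ, ite_not]

theorem numOutsideRange_cons_lt (B : Fin m → E) (j : Fin m) {X : Fin (n + 1) → E}
    (hX : X 0 ∉ Set.range B) :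
    numOutsideRange B (Fin.cons (B j) (Fin.tail X) : Fin (n + 1) → E) < numOutsideRange B X := by
  conv_rhs => rw [← Fin.cons_self_tail X]
  rw [numOutsideRange_cons, numOutsideRange_cons, if_pos (Set.mem_range_self j), if_neg hX]
  omega

end numOutsideRange

theorem IsGP.eq_of_apply_update_eq {E : Type*} {r : ℕ} {f g : (Fin (r + 1) → E) → ℚ}
    (hf : IsAlt f) (hg : IsAlt g) (hGPf : IsGP f) (hGPg : IsGP g) {B : Fin (r + 1) → E}
    (hB : f B ≠ 0) (hB' : f B = g B)
    (hupd : ∀ j e, f (Function.update B j e) = g (Function.update B j e)) : f = g := by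
  suffices ∀ N X, numOutsideRange B X = N → f X = g X from funext fun X => this _ X rfl
  intro N
  induction N using Nat.strong_induction_on with
  | _ N ih =>
  intro X hN
  by_cases hX : ∀ l, X l ∈ Set.range B
  · exact hf.apply_eq_of_forall_mem_range hg hB' hX
  obtain ⟨l, hl⟩ := not_forall.mp hX
  have hl0 : (X ∘ Equiv.swap 0 l) 0 ∉ Set.range B := by simpa using hl
  rw [← hf.apply_comp_perm_eq_iff hg (Equiv.swap 0 l)]
  refine hGPf.apply_eq_of_forall_apply_cons_eq hf hg hGPg hB hB' (fun j => hupd j _)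
    fun j => ih _ ?_ _ rfl
  rw [← hN, ← numOutsideRange_comp_perm B X (Equiv.swap 0 l)]
  exact numOutsideRange_cons_lt B j hl0

theorem orientation_unique_general {E : Type*} {r : ℕ} (χ χ' m : (Fin (r + 1) → E) → ℚ)
    (hm : ∀ x, 0 < m x)
    (hmsym : ∀ (σ : Equiv.Perm (Fin (r + 1))) (x : Fin (r + 1) → E), m (x ∘ σ) = m x)
    (hχalt : IsAlt χ) (hχ'alt : IsAlt χ')
    (hGP : IsGP (fun x => χ x * m x)) (hGP' : IsGP (fun x => χ' x * m x))
    (B₀ : Fin (r + 1) → E) (hB₀ : χ B₀ ≠ 0) (hB₀eq : χ' B₀ = χ B₀)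
    (h1 : ∀ (i : Fin (r + 1)) (e : E), e ≠ B₀ i →
      χ' (Function.update B₀ i e) = χ (Function.update B₀ i e)) :
    χ = χ' := by
  have hupd : ∀ i e, χ (Function.update B₀ i e) * m (Function.update B₀ i e) =
      χ' (Function.update B₀ i e) * m (Function.update B₀ i e) := by
    intro i e
    rcases eq_or_ne e (B₀ i) with rfl | he
    · rw [Function.update_eq_self, hB₀eq]
    · rw [h1 i e he]
  have hprod := IsGP.eq_of_apply_update_eq (hχalt.mul_of_comp_perm_eq hmsym)
    (hχ'alt.mul_of_comp_perm_eq hmsym) hGP hGP' (mul_ne_zero hB₀ (hm B₀).ne')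
    (by rw [hB₀eq]) hupd
  funext x
  exact mul_right_cancel₀ (hm x).ne' (congrFun hprod x)

/-- Uniqueness of the orientation: two chirotopes with the same multiplicity, the same
support, compatible with (GP), agreeing on `B₀` and on all its neighbours, coincide. -/
theorem orientation_unique {E : Type*} {r : ℕ} (χ χ' m : (Fin (r + 1) → E) → ℚ)
    (hχr : ∀ x, χ x = -1 ∨ χ x = 0 ∨ χ x = 1)
    (hχ'r : ∀ x, χ' x = -1 ∨ χ' x = 0 ∨ χ' x = 1)
    (hm : ∀ x, 0 < m x)
    (hmsym : ∀ (σ : Equiv.Perm (Fin (r + 1))) (x : Fin (r + 1) → E), m (x ∘ σ) = m x)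
    (hχalt : IsAlt χ) (hχ'alt : IsAlt χ')
    (hGP : IsGP (fun x => χ x * m x)) (hGP' : IsGP (fun x => χ' x * m x))
    (hsupp : ∀ x, χ x = 0 ↔ χ' x = 0)
    (B₀ : Fin (r + 1) → E) (hB₀ : χ B₀ ≠ 0) (hB₀eq : χ' B₀ = χ B₀)
    (h1 : ∀ (i : Fin (r + 1)) (e : E), e ≠ B₀ i →
      χ' (Function.update B₀ i e) = χ (Function.update B₀ i e)) :
    χ = χ' :=
  orientation_unique_general χ χ' m hm hmsym hχalt hχ'alt hGP hGP' B₀ hB₀ hB₀eq h1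
end

section
/- Let f : E^r → ℚ be a GP-function and (a₁,…,a_r) ∈ E^r with f(a₁,…,a_r) ≠ 0. Then for every (b₁,…,b_r) ∈ E^r with f(b₁,…,b_r) ≠ 0, there exists an index j such that f(b_j, a₂,…,a_r) ≠ 0. -/
open Finset

/-- Basis exchange for GP-functions: if `f a ≠ 0` and `f b ≠ 0`, then some `b j` can
replace the first entry of `a` keeping `f` nonzero. -/
theorem GP_exchange {E : Type*} {r : ℕ} (f : (Fin (r + 1) → E) → ℚ)
    (halt : IsAlt f) (hGP : IsGP f) (a b : Fin (r + 1) → E)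
    (ha : f a ≠ 0) (hb : f b ≠ 0) :
    ∃ j : Fin (r + 1), f (Function.update a 0 (b j)) ≠ 0 := by
  by_contra h
  push_neg at h
  have key := hGP (Fin.tail a) (Fin.cons (a 0) b)
  rw [Fin.sum_univ_succ] at key
  have hcons : ∀ j : Fin (r + 1), Fin.cons (b j) (Fin.tail a) = Function.update a 0 (b j) := by
    intro j
    conv_rhs => rw [← Fin.cons_self_tail a]
    rw [Fin.update_cons_zero]
  have hzero : ∀ i : Fin (r + 1),
      (-1 : ℚ) ^ ((i.succ : Fin (r+2)) : ℕ) * f (Fin.cons ((Fin.cons (a 0) b : Fin (r+2) → E) i.succ) (Fin.tail a))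
        * f (Fin.cons (a 0) b ∘ i.succ.succAbove) = 0 := by
    intro i
    rw [Fin.cons_succ, hcons, h]
    ring
  rw [Finset.sum_eq_zero (fun i _ => hzero i)] at key
  have hb' : (Fin.cons (a 0) b ∘ (0 : Fin (r + 2)).succAbove) = b := by
    funext i
    simp [Fin.succAbove_zero]
  rw [hb'] at key
  simp [Fin.cons_self_tail] at key
  tauto
end
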